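/- Assume β < β_cr. For the block magnetization chain started from any value s ≥ 0 (componentwise) and any t ≥ 0: 0 ≤ E_s[Σ_{i=1}^m a_i S_t^{(i)}] ≤ ρ_n^t Σ_{i=1}^m a_i s^{(i)}, and for each i, 0 ≤ E_s[S_t^{(i)}] ≤ √p_i · ρ_n^t (Σ_{j=1}^m (s^{(j)})²/p_j)^{1/2}. -/

import Mathlib

/-!
The Glauber dynamics is monotone: refreshing the same vertex of two ordered configurations with a
common uniform variable keeps them ordered. Along this coupling the expected difference of the
block magnetizations is contracted by `Q` at each step, since `r₊(s) = sigmoid (2βs)` is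
`β/2`-Lipschitz and the mean field at `v` is `∑ l, k (g v) l * S^{(l)}` up to the self-interaction;
hence `E_σ S_t - E_τ S_t ≤ Qᵗ (S(σ) - S(τ))` whenever `τ ≤ σ`. If all block magnetizations of `σ`
are nonnegative, a block-preserving relabelling `τ` of the flipped configuration `-σ` lies below
`σ`, and by spin-flip symmetry `E_τ S_t = -E_σ S_t`; so `0 ≤ E_σ S_t ≤ Qᵗ S(σ)`. Finally
`a Qᵗ = ρ_nᵗ a`, and `Q` is self-adjoint on `ℓ²(1/p)` with the positive eigenvector `p a`, so by the
Schur test its norm there is at most `ρ_n`.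
-/
open Finset MeasureTheory Real Filter

namespace MultiIsing

/-- The real spin value attached to a Boolean spin. -/
def spin (b : Bool) : ℝ := if b then 1 else -1

/-- `r₊(s) = e^{βs}/(e^{βs}+e^{-βs})`. -/
noncomputable def rp (β s : ℝ) : ℝ :=
  Real.exp (β * s) / (Real.exp (β * s) + Real.exp (-(β * s)))

/-- `r₋(s) = e^{-βs}/(e^{βs}+e^{-βs})`. -/
noncomputable def rm (β s : ℝ) : ℝ :=
  Real.exp (-(β * s)) / (Real.exp (β * s) + Real.exp (-(β * s)))

variable {m : ℕ}

/-- `g : Fin n → Fin m` realizes the partition of `n` vertices into groups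
of sizes `n * p i`. -/
def IsPartition (n : ℕ) (p : Fin m → ℝ) (g : Fin n → Fin m) : Prop :=
  0 < n ∧ ∀ i, ((Finset.univ.filter fun v => g v = i).card : ℝ) = n * p i

/-- Standing hypotheses on the parameters of the multi-component Ising model. -/
structure Params (m : ℕ) (p : Fin m → ℝ) (k : Fin m → Fin m → ℝ) : Prop where
  hm : 0 < m
  hp : ∀ i, 0 < p i
  hpsum : ∑ i, p i = 1
  hkpos : ∀ i j, 0 < k i j
  hksymm : ∀ i j, k i j = k j i

/-- `a` is the (normalized, positive) Perron–Frobenius left eigenvector of the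
matrix `B = (p i * k i j)`; its eigenvalue is then necessarily
`∑ i j, a i * p i * k i j`. -/
structure PFvec (m : ℕ) (p : Fin m → ℝ) (k : Fin m → Fin m → ℝ) (a : Fin m → ℝ) : Prop where
  hpos : ∀ i, 0 < a i
  hsum : ∑ i, a i = 1
  heig : ∀ j, ∑ i, a i * (p i * k i j) = (∑ i, ∑ j, a i * (p i * k i j)) * a j

/-- The critical inverse temperature `β_cr = 1 / (∑ i j, a i * p i * k i j)`. -/
noncomputable def betaCr (p : Fin m → ℝ) (k : Fin m → Fin m → ℝ) (a : Fin m → ℝ) : ℝ :=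
  1 / (∑ i, ∑ j, a i * (p i * k i j))

/-- The mean field `S^v = ∑_{w ≠ v} K(v,w) σ(w)` at vertex `v`. -/
noncomputable def meanField (n : ℕ) (k : Fin m → Fin m → ℝ) (g : Fin n → Fin m)
    (σ : Fin n → Bool) (v : Fin n) : ℝ :=
  ∑ w ∈ Finset.univ.filter (fun w => w ≠ v), (k (g v) (g w) / n) * spin (σ w)

/-- One-step transition probabilities of the Glauber dynamics: a uniformly chosen
vertex is refreshed to `±1` with probabilities `r±(S^v)`. -/
noncomputable def glauber (n : ℕ) (β : ℝ) (k : Fin m → Fin m → ℝ) (g : Fin n → Fin m)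
    (σ σ' : Fin n → Bool) : ℝ :=
  (1 / n) * ∑ v,
    ((if σ' = Function.update σ v true then rp β (meanField n k g σ v) else 0)
      + (if σ' = Function.update σ v false then rm β (meanField n k g σ v) else 0))

/-- `t`-step transition probabilities of a transition kernel on a finite state space. -/
noncomputable def iter {Ω : Type*} [Fintype Ω] [DecidableEq Ω] (P : Ω → Ω → ℝ) :
    ℕ → Ω → Ω → ℝ
  | 0 => fun x y => if x = y then 1 else 0
  | (t + 1) => fun x y => ∑ z, iter P t x z * P z y

/-- The Gibbs measure `μ_n(σ) ∝ exp(β ∑_{unordered pairs v ≠ w} K(v,w) σ(v) σ(w))`. -/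
noncomputable def gibbs (n : ℕ) (β : ℝ) (k : Fin m → Fin m → ℝ) (g : Fin n → Fin m)
    (σ : Fin n → Bool) : ℝ :=
  Real.exp (β * ((1 / 2) * ∑ v, ∑ w ∈ Finset.univ.filter (fun w => w ≠ v),
      (k (g v) (g w) / n) * spin (σ v) * spin (σ w))) /
    ∑ σ' : Fin n → Bool, Real.exp (β * ((1 / 2) * ∑ v, ∑ w ∈ Finset.univ.filter (fun w => w ≠ v),
      (k (g v) (g w) / n) * spin (σ' v) * spin (σ' w)))

/-- The total-variation distance between two distributions on a finite space. -/
noncomputable def tvDist {Ω : Type*} [Fintype Ω] (μ ν : Ω → ℝ) : ℝ :=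
  (1 / 2) * ∑ x, |μ x - ν x|

/-- The worst-case total-variation distance to stationarity after `t` steps. -/
noncomputable def dn (n : ℕ) (β : ℝ) (k : Fin m → Fin m → ℝ) (g : Fin n → Fin m)
    (t : ℕ) : ℝ :=
  ⨆ σ : Fin n → Bool, tvDist (fun σ' => iter (glauber n β k g) t σ σ') (gibbs n β k g)

/-- The total-variation mixing time `t_mix = min {t : d_n(t) ≤ 1/4}`. -/
noncomputable def tmix (n : ℕ) (β : ℝ) (k : Fin m → Fin m → ℝ) (g : Fin n → Fin m) : ℕ :=
  sInf {t : ℕ | dn n β k g t ≤ 1 / 4}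

/-- The normalized block magnetization `S^{(i)}(σ) = (1/n) ∑_{v ∈ G_i} σ(v)`. -/
noncomputable def Smag (n : ℕ) (g : Fin n → Fin m) (σ : Fin n → Bool) (i : Fin m) : ℝ :=
  (1 / n) * ∑ v ∈ Finset.univ.filter (fun v => g v = i), spin (σ v)

/-- The unnormalized block magnetization `M^{(i)}(σ) = ∑_{v ∈ G_i} σ(v)`. -/
noncomputable def Mvec (n : ℕ) (g : Fin n → Fin m) (σ : Fin n → Bool) (i : Fin m) : ℝ :=
  ∑ v ∈ Finset.univ.filter (fun v => g v = i), spin (σ v)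

/-- The `i`-th block Hamming distance between two configurations. -/
noncomputable def blockDist (n : ℕ) (g : Fin n → Fin m) (σ σ' : Fin n → Bool) (i : Fin m) : ℝ :=
  (1 / 2) * ∑ v ∈ Finset.univ.filter (fun v => g v = i), |spin (σ v) - spin (σ' v)|

/-- The matrix `Q = (1 - 1/n) I + (β/n) B` where `B = (p i * k i j)`. -/
noncomputable def Qmat (n : ℕ) (β : ℝ) (p : Fin m → ℝ) (k : Fin m → Fin m → ℝ) :
    Matrix (Fin m) (Fin m) ℝ :=
  (1 - 1 / (n : ℝ)) • (1 : Matrix (Fin m) (Fin m) ℝ) +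
    (β / n) • Matrix.of (fun i j => p i * k i j)

/-- `μ` is the law of the Markov chain with transition probabilities `P`
started at `x0`, as a measure on path space. -/
def IsPathMeasure {Ω : Type*} [Fintype Ω] [DecidableEq Ω] [MeasurableSpace Ω]
    (P : Ω → Ω → ℝ) (x0 : Ω) (μ : Measure (ℕ → Ω)) : Prop :=
  IsProbabilityMeasure μ ∧
    ∀ t : ℕ, ∀ f : ℕ → Ω,
      (μ {ω | ∀ s ≤ t, ω s = f s}).toReal =
        (if f 0 = x0 then ∏ s ∈ Finset.range t, P (f s) (f (s + 1)) else 0)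

/-- `μ` is a coupling of two copies of the Markov chain with transition
probabilities `P`, started at `x0` and `y0` respectively. -/
def IsCoupling {Ω : Type*} [Fintype Ω] [DecidableEq Ω] [MeasurableSpace Ω]
    (P : Ω → Ω → ℝ) (x0 y0 : Ω) (μ : Measure (ℕ → Ω × Ω)) : Prop :=
  IsProbabilityMeasure μ ∧
    (∀ t : ℕ, ∀ f : ℕ → Ω,
      (μ {ω | ∀ s ≤ t, (ω s).1 = f s}).toReal =
        (if f 0 = x0 then ∏ s ∈ Finset.range t, P (f s) (f (s + 1)) else 0)) ∧
    (∀ t : ℕ, ∀ f : ℕ → Ω,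
      (μ {ω | ∀ s ≤ t, (ω s).2 = f s}).toReal =
        (if f 0 = y0 then ∏ s ∈ Finset.range t, P (f s) (f (s + 1)) else 0))


/-- The expectation of `S_t^{(i)}` for the Glauber dynamics started at `σ`. -/
noncomputable def Eexp (n : ℕ) (β : ℝ) {m : ℕ} (k : Fin m → Fin m → ℝ) (g : Fin n → Fin m)
    (σ : Fin n → Bool) (t : ℕ) (i : Fin m) : ℝ :=
  ∑ σ' : Fin n → Bool, iter (glauber n β k g) t σ σ' * Smag n g σ' i

end MultiIsing

open Function Matrix

lemma Real.sigmoid_sub_le {x y : ℝ} (h : y ≤ x) : sigmoid x - sigmoid y ≤ (x - y) / 4 := by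
  have hderiv (z : ℝ) : HasDerivAt (fun z => z / 4 - sigmoid z)
      (1 / 4 - sigmoid z * (1 - sigmoid z)) z :=
    ((hasDerivAt_id z).div_const 4).sub (hasDerivAt_sigmoid z)
  have hmono : Monotone (fun z => z / 4 - sigmoid z) :=
    monotone_of_deriv_nonneg (fun z => (hderiv z).differentiableAt) fun z => by
      rw [(hderiv z).deriv]
      nlinarith [sq_nonneg (sigmoid z - 1 / 2)]
  linarith [hmono h]

lemma le_sqrt_mul_sqrt_sum_sq_div {ι : Type*} [Fintype ι] {p : ι → ℝ} (hp : ∀ i, 0 < p i)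
    (y : ι → ℝ) (i : ι) : y i ≤ √(p i) * √(∑ j, y j ^ 2 / p j) := by
  rw [← Real.sqrt_mul (hp i).le]
  refine (le_abs_self _).trans (Real.abs_le_sqrt ?_)
  have := Finset.single_le_sum (fun j _ => div_nonneg (sq_nonneg (y j)) (hp j).le)
    (Finset.mem_univ i)
  rwa [← div_le_iff₀' (hp i)]

lemma exists_equiv_comp_eq_of_card_fiber_eq {α γ : Type*} [Fintype α] [DecidableEq γ]
    {c c' : α → γ} (h : ∀ y, #{v | c v = y} = #{v | c' v = y}) :
    ∃ e : α ≃ α, ∀ v, c (e v) = c' v :=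
  ⟨Equiv.ofFiberEquiv fun y => Fintype.equivOfCardEq <| by
    simpa only [Fintype.card_subtype] using (h y).symm, Equiv.ofFiberEquiv_map _⟩

lemma exists_perm_blockwise_eq {α ι : Type*} [Fintype α] [DecidableEq ι] (g : α → ι)
    {x y : α → Bool} (h : ∀ i, #{v | g v = i ∧ x v = true} = #{v | g v = i ∧ y v = true}) :
    ∃ e : Equiv.Perm α, ∀ v, g (e v) = g v ∧ x (e v) = y v := by
  have hblock (z : α → Bool) (i : ι) :
      #{v | g v = i ∧ z v = true} + #{v | g v = i ∧ z v = false} = #{v | g v = i} := by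
    rw [← card_filter_add_card_filter_not (s := {v | g v = i}) (fun v => z v = true)]
    simp only [filter_filter, Bool.not_eq_true]
  obtain ⟨e, he⟩ := exists_equiv_comp_eq_of_card_fiber_eq
    (c := fun v => (g v, x v)) (c' := fun v => (g v, y v)) <| by
      rintro ⟨i, b⟩
      simp only [Prod.mk.injEq]
      cases b
      · have := hblock x i; have := hblock y i; have := h i; omega
      · exact h i
  exact ⟨e, fun v => Prod.mk.injEq .. ▸ he v⟩

namespace Matrix

variable {ι : Type*} [Fintype ι]

lemma mulVec_mono_of_nonneg {R : Type*} [Semiring R] [PartialOrder R] [IsOrderedRing R]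
    {A : Matrix ι ι R} (hA : ∀ i j, 0 ≤ A i j) {x y : ι → R} (h : x ≤ y) : A *ᵥ x ≤ A *ᵥ y :=
  fun i => Finset.sum_le_sum fun j _ => mul_le_mul_of_nonneg_left (h j) (hA i j)

lemma vecMul_pow_of_vecMul_eq_smul {R : Type*} [CommSemiring R] [DecidableEq ι]
    {A : Matrix ι ι R} {a : ι → R} {ρ : R} (h : a ᵥ* A = ρ • a) (t : ℕ) :
    a ᵥ* (A ^ t) = ρ ^ t • a := by
  induction t with
  | zero => simp
  | succ t ih => rw [pow_succ, ← vecMul_vecMul, ih, smul_vecMul, h, smul_smul, pow_succ]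

variable {A : Matrix ι ι ℝ} {p : ι → ℝ}

lemma eigenvalue_nonneg_of_vecMul_eq_smul [Nonempty ι] (hA : ∀ i j, 0 ≤ A i j) {a : ι → ℝ}
    (ha : ∀ i, 0 < a i) {ρ : ℝ} (h : a ᵥ* A = ρ • a) : 0 ≤ ρ := by
  obtain ⟨j⟩ := ‹Nonempty ι›
  have hj : 0 ≤ ρ * a j := by
    rw [← smul_eq_mul, ← Pi.smul_apply, ← h]
    exact Finset.sum_nonneg fun i _ => mul_nonneg (ha i).le (hA i j)
  exact nonneg_of_mul_nonneg_left hj (ha j)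

lemma mulVec_mul_eq_smul_of_vecMul_eq_smul (hrev : ∀ i j, A i j * p j = A j i * p i)
    {a : ι → ℝ} {ρ : ℝ} (h : a ᵥ* A = ρ • a) : A *ᵥ (p * a) = ρ • (p * a) := by
  ext i
  have hi := congrFun h i
  simp only [vecMul, dotProduct, Pi.smul_apply, smul_eq_mul] at hi
  simp only [mulVec, dotProduct, Pi.mul_apply, Pi.smul_apply, smul_eq_mul]
  calc ∑ j, A i j * (p j * a j) = p i * ∑ j, a j * A j i := by
        rw [Finset.mul_sum]
        exact Finset.sum_congr rfl fun j _ => by linear_combination a j * hrev i j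
    _ = ρ * (p i * a i) := by rw [hi]; ring

/-- Schur test; `hrev` says that `A` is self-adjoint on `ℓ²(1 / p)`. -/
lemma sum_sq_mulVec_div_le (hA : ∀ i j, 0 ≤ A i j) (hp : ∀ i, 0 < p i)
    (hrev : ∀ i j, A i j * p j = A j i * p i) {w : ι → ℝ} (hw : ∀ i, 0 < w i) {ρ : ℝ}
    (hAw : A *ᵥ w = ρ • w) (x : ι → ℝ) :
    ∑ i, (A *ᵥ x) i ^ 2 / p i ≤ ρ ^ 2 * ∑ i, x i ^ 2 / p i := by
  have hAw' (i : ι) : ∑ j, A i j * w j = ρ * w i := congrFun hAw i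
  have hCS (i : ι) : (A *ᵥ x) i ^ 2 ≤ ρ * w i * ∑ j, A i j * (x j ^ 2 / w j) := by
    rw [← hAw']
    refine Finset.sum_sq_le_sum_mul_sum_of_sq_le_mul _ (fun j _ => mul_nonneg (hA i j) (hw j).le)
      (fun j _ => mul_nonneg (hA i j) (div_nonneg (sq_nonneg _) (hw j).le)) fun j _ => ?_
    have := (hw j).ne'
    exact le_of_eq (by field_simp)
  calc ∑ i, (A *ᵥ x) i ^ 2 / p i
      ≤ ∑ i, ρ * w i * (∑ j, A i j * (x j ^ 2 / w j)) / p i :=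
        Finset.sum_le_sum fun i _ => div_le_div_of_nonneg_right (hCS i) (hp i).le
    _ = ∑ i, ∑ j, ρ * (x j ^ 2 / (w j * p j)) * (A j i * w i) := by
        refine Finset.sum_congr rfl fun i _ => ?_
        rw [Finset.mul_sum, Finset.sum_div]
        refine Finset.sum_congr rfl fun j _ => ?_
        have := (hw j).ne'
        have := (hp i).ne'
        have := (hp j).ne'
        field_simp
        linear_combination ρ * w i * x j ^ 2 * hrev i j
    _ = ∑ j, ρ * (x j ^ 2 / (w j * p j)) * (ρ * w j) := by
        rw [Finset.sum_comm]
        exact Finset.sum_congr rfl fun j _ => by rw [← Finset.mul_sum, hAw']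
    _ = ρ ^ 2 * ∑ i, x i ^ 2 / p i := by
        rw [Finset.mul_sum]
        refine Finset.sum_congr rfl fun j _ => ?_
        have := (hw j).ne'
        field_simp

lemma sum_sq_pow_mulVec_div_le [DecidableEq ι] (hA : ∀ i j, 0 ≤ A i j) (hp : ∀ i, 0 < p i)
    (hrev : ∀ i j, A i j * p j = A j i * p i) {w : ι → ℝ} (hw : ∀ i, 0 < w i) {ρ : ℝ}
    (hAw : A *ᵥ w = ρ • w) (t : ℕ) (x : ι → ℝ) :
    ∑ i, (A ^ t *ᵥ x) i ^ 2 / p i ≤ (ρ ^ t) ^ 2 * ∑ i, x i ^ 2 / p i := by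
  induction t with
  | zero => simp
  | succ t ih =>
    rw [pow_succ', ← mulVec_mulVec]
    calc ∑ i, (A *ᵥ (A ^ t *ᵥ x)) i ^ 2 / p i
        ≤ ρ ^ 2 * ∑ i, (A ^ t *ᵥ x) i ^ 2 / p i := sum_sq_mulVec_div_le hA hp hrev hw hAw _
      _ ≤ ρ ^ 2 * ((ρ ^ t) ^ 2 * ∑ i, x i ^ 2 / p i) := by gcongr
      _ = (ρ ^ (t + 1)) ^ 2 * ∑ i, x i ^ 2 / p i := by ring

lemma pow_mulVec_apply_le [DecidableEq ι] (hA : ∀ i j, 0 ≤ A i j) (hp : ∀ i, 0 < p i)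
    (hrev : ∀ i j, A i j * p j = A j i * p i) {a : ι → ℝ} (ha : ∀ i, 0 < a i) {ρ : ℝ}
    (haA : a ᵥ* A = ρ • a) (t : ℕ) (x : ι → ℝ) (i : ι) :
    (A ^ t *ᵥ x) i ≤ √(p i) * (ρ ^ t * √(∑ j, x j ^ 2 / p j)) := by
  have : Nonempty ι := ⟨i⟩
  have hρ := eigenvalue_nonneg_of_vecMul_eq_smul hA ha haA
  calc (A ^ t *ᵥ x) i ≤ √(p i) * √(∑ j, (A ^ t *ᵥ x) j ^ 2 / p j) :=
        le_sqrt_mul_sqrt_sum_sq_div hp _ i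
    _ ≤ √(p i) * √((ρ ^ t) ^ 2 * ∑ j, x j ^ 2 / p j) := by
        gcongr
        exact sum_sq_pow_mulVec_div_le hA hp hrev (fun i => mul_pos (hp i) (ha i))
          (mulVec_mul_eq_smul_of_vecMul_eq_smul hrev haA) t x
    _ = √(p i) * (ρ ^ t * √(∑ j, x j ^ 2 / p j)) := by
        rw [Real.sqrt_mul (sq_nonneg _), Real.sqrt_sq (pow_nonneg hρ t)]

end Matrix

namespace MultiIsing

lemma rp_eq_sigmoid (β s : ℝ) : rp β s = sigmoid (2 * (β * s)) := by
  rw [rp, sigmoid_def, show -(2 * (β * s)) = -(β * s) - β * s by ring, exp_sub]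
  field_simp

lemma rp_neg (β s : ℝ) : rp β (-s) = rm β s := by
  rw [rp, rm, mul_neg, neg_neg, add_comm]

lemma rm_neg (β s : ℝ) : rm β (-s) = rp β s := by
  rw [← rp_neg, neg_neg]

lemma rm_eq_one_sub_rp (β s : ℝ) : rm β s = 1 - rp β s := by
  rw [← rp_neg, rp_eq_sigmoid, rp_eq_sigmoid, ← sigmoid_neg]
  ring_nf

lemma rp_nonneg (β s : ℝ) : 0 ≤ rp β s := by
  rw [rp_eq_sigmoid]; exact sigmoid_nonneg _

lemma rp_le_one (β s : ℝ) : rp β s ≤ 1 := by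
  rw [rp_eq_sigmoid]; exact sigmoid_le_one _

lemma rp_mono {β : ℝ} (hβ : 0 ≤ β) : Monotone (rp β) := fun s s' h => by
  simp only [rp_eq_sigmoid]
  exact sigmoid_le (by nlinarith)

lemma two_mul_rp_sub_le {β s s' : ℝ} (hβ : 0 ≤ β) (h : s' ≤ s) :
    2 * (rp β s - rp β s') ≤ β * (s - s') := by
  have := sigmoid_sub_le (show 2 * (β * s') ≤ 2 * (β * s) by nlinarith)
  rw [rp_eq_sigmoid, rp_eq_sigmoid]
  linarith

@[simp] lemma spin_true : spin true = 1 := rfl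

@[simp] lemma spin_false : spin false = -1 := rfl

@[simp] lemma spin_not (b : Bool) : spin (!b) = -spin b := by
  cases b <;> simp

lemma spin_mono : Monotone spin := by
  intro b c h
  rw [Bool.le_iff_imp] at h
  cases b <;> cases c <;> simp_all

lemma sum_spin {α : Type*} (s : Finset α) (σ : α → Bool) :
    ∑ v ∈ s, spin (σ v) = #(s.filter (σ · = true)) - #(s.filter (σ · = false)) := by
  simp only [spin, Finset.sum_ite, Finset.sum_const, nsmul_eq_mul, mul_one, mul_neg,
    Bool.not_eq_true]
  ring

variable {m n : ℕ}

lemma Smag_mono (g : Fin n → Fin m) : Monotone (Smag n g) := fun τ σ h i =>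
  mul_le_mul_of_nonneg_left (Finset.sum_le_sum fun v _ => spin_mono (h v)) (by positivity)

lemma Smag_update (g : Fin n → Fin m) (σ : Fin n → Bool) (v : Fin n) (b : Bool) (j : Fin m) :
    Smag n g (update σ v b) j =
      Smag n g σ j + if g v = j then (spin b - spin (σ v)) / n else 0 := by
  have hspin (w : Fin n) : spin (update σ v b w) =
      spin (σ w) + if w = v then spin b - spin (σ v) else 0 := by
    by_cases hw : w = v <;> simp [hw]
  simp only [Smag, hspin, Finset.sum_add_distrib, Finset.sum_ite_eq', Finset.mem_filter,
    Finset.mem_univ, true_and]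
  split_ifs <;> ring

lemma meanField_mono (k : Fin m → Fin m → ℝ) (hk : ∀ i j, 0 ≤ k i j) (g : Fin n → Fin m)
    (v : Fin n) : Monotone fun σ => meanField n k g σ v := fun _ _ h =>
  Finset.sum_le_sum fun w _ =>
    mul_le_mul_of_nonneg_left (spin_mono (h w)) (div_nonneg (hk _ _) n.cast_nonneg)

lemma meanField_eq (k : Fin m → Fin m → ℝ) (g : Fin n → Fin m) (σ : Fin n → Bool) (v : Fin n) :
    meanField n k g σ v =
      ∑ l, k (g v) l * Smag n g σ l - k (g v) (g v) * spin (σ v) / n := by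
  rw [meanField, Finset.filter_ne', Finset.sum_erase_eq_sub (Finset.mem_univ v),
    ← Finset.sum_fiberwise Finset.univ g]
  congr 1
  · refine Finset.sum_congr rfl fun l _ => ?_
    rw [Smag, ← mul_assoc, Finset.mul_sum]
    refine Finset.sum_congr rfl fun w hw => ?_
    rw [(Finset.mem_filter.1 hw).2]
    ring
  · ring

lemma meanField_sub_le {k : Fin m → Fin m → ℝ} (hk : ∀ i j, 0 ≤ k i j) (g : Fin n → Fin m)
    {σ τ : Fin n → Bool} (h : τ ≤ σ) (v : Fin n) :
    meanField n k g σ v - meanField n k g τ v ≤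
      ∑ l, k (g v) l * (Smag n g σ l - Smag n g τ l) := by
  have hself : 0 ≤ k (g v) (g v) * (spin (σ v) - spin (τ v)) / n :=
    div_nonneg (mul_nonneg (hk _ _) (sub_nonneg.2 (spin_mono (h v)))) n.cast_nonneg
  rw [meanField_eq, meanField_eq]
  simp only [mul_sub, Finset.sum_sub_distrib, sub_div] at hself ⊢
  linarith

lemma Qmat_apply (n : ℕ) (β : ℝ) (p : Fin m → ℝ) (k : Fin m → Fin m → ℝ) (i j : Fin m) :
    Qmat n β p k i j =
      (1 - 1 / n) * (1 : Matrix (Fin m) (Fin m) ℝ) i j + β / n * (p i * k i j) := by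
  simp [Qmat]

lemma Qmat_nonneg {β : ℝ} (hβ : 0 ≤ β) {p : Fin m → ℝ} (hp : ∀ i, 0 ≤ p i)
    {k : Fin m → Fin m → ℝ} (hk : ∀ i j, 0 ≤ k i j) (i j : Fin m) : 0 ≤ Qmat n β p k i j := by
  have hn : (1 : ℝ) / n ≤ 1 := by simpa using Nat.cast_inv_le_one (α := ℝ) n
  rw [Qmat_apply, one_apply]
  have := hp i; have := hk i j
  have : (0 : ℝ) ≤ if i = j then 1 else 0 := by split_ifs <;> norm_num
  have := sub_nonneg.2 hn
  positivity

lemma Qmat_reversible (n : ℕ) (β : ℝ) {p : Fin m → ℝ} {k : Fin m → Fin m → ℝ}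
    (hk : ∀ i j, k i j = k j i) (i j : Fin m) :
    Qmat n β p k i j * p j = Qmat n β p k j i * p i := by
  rw [Qmat_apply, Qmat_apply, hk i j]
  by_cases h : i = j
  · subst h; rfl
  · simp only [one_apply_ne h, one_apply_ne (Ne.symm h)]; ring

lemma Qmat_mulVec_apply (n : ℕ) (β : ℝ) (p : Fin m → ℝ) (k : Fin m → Fin m → ℝ)
    (x : Fin m → ℝ) (i : Fin m) :
    (Qmat n β p k *ᵥ x) i = (1 - 1 / n) * x i + β / n * (p i * ∑ j, k i j * x j) := by
  simp only [mulVec, dotProduct, Qmat_apply, add_mul, Finset.sum_add_distrib, one_apply, mul_ite,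
    mul_one, mul_zero, ite_mul, zero_mul, Finset.sum_ite_eq, Finset.mem_univ, if_true,
    ← Finset.mul_sum, mul_assoc]

section OneStep

variable {E : Type*} [AddCommGroup E] [Module ℝ E] (n) (β : ℝ) (k : Fin m → Fin m → ℝ)
  (g : Fin n → Fin m)

noncomputable def oneStepMean (F : (Fin n → Bool) → E) (σ : Fin n → Bool) : E :=
  (1 / n : ℝ) • ∑ v, (rp β (meanField n k g σ v) • F (update σ v true) +
    rm β (meanField n k g σ v) • F (update σ v false))

lemma sum_glauber_smul (F : (Fin n → Bool) → E) (σ : Fin n → Bool) :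
    ∑ σ', glauber n β k g σ σ' • F σ' = oneStepMean n β k g F σ := by
  simp only [glauber, oneStepMean, mul_smul, ← Finset.smul_sum, Finset.sum_smul]
  rw [Finset.sum_comm]
  simp only [add_smul, ite_smul, zero_smul, Finset.sum_add_distrib, Finset.sum_ite_eq',
    Finset.mem_univ, if_true]

/-- The three terms are the outcomes of the monotone coupling of the two chains, which refreshes
the same vertex in both copies with a common uniform variable. -/
lemma oneStepMean_sub (F : (Fin n → Bool) → E) (σ τ : Fin n → Bool) :
    oneStepMean n β k g F σ - oneStepMean n β k g F τ =
      (1 / n : ℝ) • ∑ v,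
        (rp β (meanField n k g τ v) • (F (update σ v true) - F (update τ v true)) +
          (rp β (meanField n k g σ v) - rp β (meanField n k g τ v)) •
            (F (update σ v true) - F (update τ v false)) +
          (1 - rp β (meanField n k g σ v)) • (F (update σ v false) - F (update τ v false))) := by
  simp only [oneStepMean, rm_eq_one_sub_rp, ← smul_sub, ← Finset.sum_sub_distrib]
  congr 1
  exact Finset.sum_congr rfl fun v _ => by module

variable {n β k g}

lemma update_le_update_of_le {σ τ : Fin n → Bool} (h : τ ≤ σ) (v : Fin n) {b c : Bool}
    (hbc : b ≤ c) : update τ v b ≤ update σ v c :=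
  update_le_update_iff.2 ⟨hbc, fun w _ => h w⟩

variable [PartialOrder E] [IsOrderedAddMonoid E] [PosSMulMono ℝ E]

lemma oneStepMean_mono (hβ : 0 ≤ β) (hk : ∀ i j, 0 ≤ k i j) {F : (Fin n → Bool) → E}
    (hF : Monotone F) : Monotone (oneStepMean n β k g F) := by
  intro τ σ h
  rw [← sub_nonneg, oneStepMean_sub]
  refine smul_nonneg (by positivity) (Finset.sum_nonneg fun v _ => ?_)
  have hr : 0 ≤ rp β (meanField n k g σ v) - rp β (meanField n k g τ v) :=
    sub_nonneg.2 (rp_mono hβ (meanField_mono k hk g v h))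
  have hF' {b c : Bool} (hbc : b ≤ c) : 0 ≤ F (update σ v c) - F (update τ v b) :=
    sub_nonneg.2 (hF (update_le_update_of_le h v hbc))
  exact add_nonneg (add_nonneg (smul_nonneg (rp_nonneg _ _) (hF' le_rfl))
    (smul_nonneg hr (hF' (Bool.false_le _))))
    (smul_nonneg (sub_nonneg.2 (rp_le_one _ _)) (hF' le_rfl))

lemma oneStepMean_sub_le {E' : Type*} [AddCommGroup E'] [Module ℝ E'] (hβ : 0 ≤ β)
    (hk : ∀ i j, 0 ≤ k i j) {F : (Fin n → Bool) → E} {G : (Fin n → Bool) → E'} (L : E' →ₗ[ℝ] E)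
    (hFG : ∀ ⦃σ τ⦄, τ ≤ σ → F σ - F τ ≤ L (G σ - G τ)) {σ τ : Fin n → Bool} (h : τ ≤ σ) :
    oneStepMean n β k g F σ - oneStepMean n β k g F τ ≤
      L (oneStepMean n β k g G σ - oneStepMean n β k g G τ) := by
  rw [oneStepMean_sub, oneStepMean_sub, map_smul, map_sum]
  refine smul_le_smul_of_nonneg_left (Finset.sum_le_sum fun v _ => ?_) (by positivity)
  have hr : 0 ≤ rp β (meanField n k g σ v) - rp β (meanField n k g τ v) :=
    sub_nonneg.2 (rp_mono hβ (meanField_mono k hk g v h))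
  have hFG' {b c : Bool} (hbc : b ≤ c) := hFG (update_le_update_of_le h v hbc)
  simp only [map_add, map_smul]
  exact add_le_add (add_le_add (smul_le_smul_of_nonneg_left (hFG' le_rfl) (rp_nonneg _ _))
    (smul_le_smul_of_nonneg_left (hFG' (Bool.false_le _)) hr))
    (smul_le_smul_of_nonneg_left (hFG' le_rfl) (sub_nonneg.2 (rp_le_one _ _)))

end OneStep

lemma iter_apply_eq_pow {Ω : Type*} [Fintype Ω] [DecidableEq Ω] (P : Ω → Ω → ℝ) (t : ℕ)
    (x y : Ω) : iter P t x y = (Matrix.of P ^ t) x y := by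
  induction t generalizing y with
  | zero => simp [iter, one_apply]
  | succ t ih => simp [iter, pow_succ, mul_apply, ih]

lemma iter_succ_apply' {Ω : Type*} [Fintype Ω] [DecidableEq Ω] (P : Ω → Ω → ℝ) (t : ℕ)
    (x y : Ω) : iter P (t + 1) x y = ∑ z, P x z * iter P t z y := by
  simp [iter_apply_eq_pow, pow_succ', mul_apply]

variable {β : ℝ} {k : Fin m → Fin m → ℝ} {g : Fin n → Fin m}

lemma Eexp_zero (σ : Fin n → Bool) : Eexp n β k g σ 0 = Smag n g σ := by
  ext i
  simp [Eexp, iter]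

lemma Eexp_succ (σ : Fin n → Bool) (t : ℕ) :
    Eexp n β k g σ (t + 1) = oneStepMean n β k g (fun τ => Eexp n β k g τ t) σ := by
  ext i
  rw [← sum_glauber_smul, Finset.sum_apply]
  simp only [Eexp, iter_succ_apply', Finset.sum_mul, Pi.smul_apply, smul_eq_mul, Finset.mul_sum]
  rw [Finset.sum_comm]
  simp only [mul_assoc]

lemma Eexp_mono (hβ : 0 ≤ β) (hk : ∀ i j, 0 ≤ k i j) (t : ℕ) :
    Monotone fun σ => Eexp n β k g σ t := by
  induction t with
  | zero => simpa only [Eexp_zero] using Smag_mono g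
  | succ t ih => simpa only [Eexp_succ] using oneStepMean_mono hβ hk ih

lemma oneStepMean_Smag_apply (hn : 0 < n) (σ : Fin n → Bool) (j : Fin m) :
    oneStepMean n β k g (Smag n g) σ j = (1 - 1 / n) * Smag n g σ j +
      1 / n ^ 2 * ∑ v with g v = j, (2 * rp β (meanField n k g σ v) - 1) := by
  have hn' : (n : ℝ) ≠ 0 := by positivity
  have hsummand (v : Fin n) :
      rp β (meanField n k g σ v) * Smag n g (update σ v true) j +
        rm β (meanField n k g σ v) * Smag n g (update σ v false) j =
      Smag n g σ j + if g v = j then (2 * rp β (meanField n k g σ v) - 1 - spin (σ v)) / n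
        else 0 := by
    rw [Smag_update, Smag_update, rm_eq_one_sub_rp]
    split_ifs
    · rw [spin_true, spin_false]; ring
    · ring
  have hblock : ∑ v with g v = j, spin (σ v) = n * Smag n g σ j := by
    rw [Smag]; field_simp
  simp only [oneStepMean, Pi.smul_apply, Finset.sum_apply, Pi.add_apply, smul_eq_mul, hsummand]
  rw [Finset.sum_add_distrib, Finset.sum_const, Finset.card_univ, Fintype.card_fin, nsmul_eq_mul,
    ← Finset.sum_filter, ← Finset.sum_div, Finset.sum_sub_distrib, hblock]
  field_simp
  ring

lemma oneStepMean_Smag_sub_le {p : Fin m → ℝ} (hg : IsPartition n p g) (hβ : 0 ≤ β)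
    (hk : ∀ i j, 0 ≤ k i j) {σ τ : Fin n → Bool} (h : τ ≤ σ) :
    oneStepMean n β k g (Smag n g) σ - oneStepMean n β k g (Smag n g) τ ≤
      Qmat n β p k *ᵥ (Smag n g σ - Smag n g τ) := by
  intro j
  set ΔS := Smag n g σ - Smag n g τ
  have hdrift : ∑ v with g v = j, (2 * rp β (meanField n k g σ v) - 1) -
      ∑ v with g v = j, (2 * rp β (meanField n k g τ v) - 1) ≤
      n * p j * (β * ∑ l, k j l * ΔS l) := by
    rw [← Finset.sum_sub_distrib, ← hg.2 j, ← nsmul_eq_mul, ← Finset.sum_const]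
    refine Finset.sum_le_sum fun v hv => ?_
    rw [← (Finset.mem_filter.1 hv).2]
    calc 2 * rp β (meanField n k g σ v) - 1 - (2 * rp β (meanField n k g τ v) - 1)
        ≤ β * (meanField n k g σ v - meanField n k g τ v) :=
          by linarith [two_mul_rp_sub_le hβ (meanField_mono k hk g v h)]
      _ ≤ β * ∑ l, k (g v) l * ΔS l :=
          mul_le_mul_of_nonneg_left (meanField_sub_le hk g h v) hβ
  have hn : (0 : ℝ) < n := by exact_mod_cast hg.1
  have := mul_le_mul_of_nonneg_left hdrift (by positivity : (0 : ℝ) ≤ 1 / n ^ 2)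
  simp only [Pi.sub_apply, oneStepMean_Smag_apply hg.1, Qmat_mulVec_apply]
  calc _ = (1 - 1 / n) * ΔS j + 1 / n ^ 2 *
        (∑ v with g v = j, (2 * rp β (meanField n k g σ v) - 1) -
          ∑ v with g v = j, (2 * rp β (meanField n k g τ v) - 1)) := by
        simp only [ΔS, Pi.sub_apply]; ring
    _ ≤ (1 - 1 / n) * ΔS j + 1 / n ^ 2 * (n * p j * (β * ∑ l, k j l * ΔS l)) := by linarith
    _ = _ := by field_simp

lemma Eexp_sub_le {p : Fin m → ℝ} (hg : IsPartition n p g) (hβ : 0 ≤ β) (hp : ∀ i, 0 ≤ p i)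
    (hk : ∀ i j, 0 ≤ k i j) (t : ℕ) {σ τ : Fin n → Bool} (h : τ ≤ σ) :
    Eexp n β k g σ t - Eexp n β k g τ t ≤ Qmat n β p k ^ t *ᵥ (Smag n g σ - Smag n g τ) := by
  induction t generalizing σ τ with
  | zero => simp [Eexp_zero]
  | succ t ih =>
    rw [Eexp_succ, Eexp_succ, pow_succ, ← mulVec_mulVec]
    calc _ ≤ Qmat n β p k ^ t *ᵥ
          (oneStepMean n β k g (Smag n g) σ - oneStepMean n β k g (Smag n g) τ) :=
          oneStepMean_sub_le hβ hk (Qmat n β p k ^ t).mulVecLin (fun σ τ h => ih h) h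
      _ ≤ _ := mulVec_mono_of_nonneg (pow_apply_nonneg (Qmat_nonneg hβ hp hk) t)
          (oneStepMean_Smag_sub_le hg hβ hk h)

def flipPerm (e : Equiv.Perm (Fin n)) : Equiv.Perm (Fin n → Bool) where
  toFun σ v := !σ (e v)
  invFun σ v := !σ (e.symm v)
  left_inv σ := by ext; simp
  right_inv σ := by ext; simp

section FlipSymmetry

variable (e : Equiv.Perm (Fin n))

lemma Smag_flipPerm (he : ∀ v, g (e v) = g v) (σ : Fin n → Bool) :
    Smag n g (flipPerm e σ) = -Smag n g σ := by
  ext i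
  simp only [Smag, flipPerm, Equiv.coe_fn_mk, spin_not, Finset.sum_neg_distrib, mul_neg,
    Pi.neg_apply]
  congr 2
  exact Finset.sum_equiv e (fun v => by simp [he v]) fun v _ => rfl

lemma meanField_flipPerm (he : ∀ v, g (e v) = g v) (σ : Fin n → Bool) (v : Fin n) :
    meanField n k g (flipPerm e σ) v = -meanField n k g σ (e v) := by
  simp only [meanField, flipPerm, Equiv.coe_fn_mk, spin_not, mul_neg, Finset.sum_neg_distrib]
  congr 1
  refine Finset.sum_equiv e (fun w => by simp) fun w _ => ?_
  rw [he v, he w]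

lemma update_flipPerm (σ : Fin n → Bool) (v : Fin n) (b : Bool) :
    update (flipPerm e σ) v b = flipPerm e (update σ (e v) (!b)) := by
  ext w
  by_cases hw : w = v
  · subst hw; simp [flipPerm]
  · simp [flipPerm, hw, e.injective.ne_iff]

lemma glauber_flipPerm (he : ∀ v, g (e v) = g v) (σ σ' : Fin n → Bool) :
    glauber n β k g (flipPerm e σ) (flipPerm e σ') = glauber n β k g σ σ' := by
  rw [glauber, glauber]
  conv_rhs => rw [← Equiv.sum_comp e]
  congr 1
  refine Finset.sum_congr rfl fun v _ => ?_
  simp only [update_flipPerm, (flipPerm e).injective.eq_iff, meanField_flipPerm e he, rp_neg,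
    rm_neg, Bool.not_true, Bool.not_false]
  rw [add_comm]

lemma iter_flipPerm (he : ∀ v, g (e v) = g v) (t : ℕ) (σ σ' : Fin n → Bool) :
    iter (glauber n β k g) t (flipPerm e σ) (flipPerm e σ') = iter (glauber n β k g) t σ σ' := by
  induction t generalizing σ' with
  | zero => simp only [iter, (flipPerm e).injective.eq_iff]
  | succ t ih =>
    simp only [iter]
    rw [← Equiv.sum_comp (flipPerm e)]
    simp only [ih, glauber_flipPerm e he]

lemma Eexp_flipPerm (he : ∀ v, g (e v) = g v) (σ : Fin n → Bool) (t : ℕ) :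
    Eexp n β k g (flipPerm e σ) t = -Eexp n β k g σ t := by
  ext i
  rw [Eexp, ← Equiv.sum_comp (flipPerm e)]
  simp [iter_flipPerm e he, Smag_flipPerm e he, Eexp]

end FlipSymmetry

lemma exists_flipPerm_le (hn : 0 < n) {σ : Fin n → Bool} (hσ : ∀ i, 0 ≤ Smag n g σ i) :
    ∃ e : Equiv.Perm (Fin n), (∀ v, g (e v) = g v) ∧ flipPerm e σ ≤ σ := by
  have hcard (i : Fin m) : #{v | g v = i ∧ σ v = false} ≤ #{v | g v = i ∧ σ v = true} := by
    have := hσ i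
    rw [Smag, sum_spin] at this
    simp only [Finset.filter_filter] at this
    have hn' : (0 : ℝ) < 1 / n := by positivity
    exact_mod_cast sub_nonneg.1 ((mul_nonneg_iff_of_pos_left hn').1 this)
  -- `R i` consists of `true` spins of `σ` in block `i`, as many as `σ` has `false` ones there, so
  -- the configuration `τ` that is `true` exactly on `⋃ i, R i` lies below `σ` and has, block by
  -- block, the spin counts of `!σ`.
  choose R hRsub hRcard using fun i => Finset.exists_subset_card_eq (hcard i)
  have hR {i : Fin m} {v : Fin n} (hv : v ∈ R i) : g v = i ∧ σ v = true := by
    simpa using hRsub i hv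
  set τ : Fin n → Bool := fun v => decide (v ∈ R (g v))
  obtain ⟨e, he⟩ := exists_perm_blockwise_eq g (x := fun v => !σ v) (y := τ) fun i => by
    simp only [Bool.not_eq_true']
    rw [← hRcard i]
    congr 1
    ext v
    simp only [Finset.mem_filter, Finset.mem_univ, true_and, τ, decide_eq_true_eq]
    constructor
    · intro hv; exact ⟨(hR hv).1, by rwa [(hR hv).1]⟩
    · rintro ⟨rfl, hv⟩; exact hv
  refine ⟨e, fun v => (he v).1, fun v => ?_⟩
  change (!σ (e v)) ≤ σ v
  rw [(he v).2, Bool.le_iff_imp]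
  exact fun hv => (hR (of_decide_eq_true hv)).2

theorem magnetization_expectation_bounds_general
    (m : ℕ) (p : Fin m → ℝ) (k : Fin m → Fin m → ℝ) (a : Fin m → ℝ)
    (hP : Params m p k) (ha : PFvec m p k a)
    (β : ℝ) (hβ0 : 0 ≤ β)
    (n : ℕ) (g : Fin n → Fin m) (hg : IsPartition n p g)
    (ρn : ℝ) (hρ : ∀ j, ∑ i, a i * Qmat n β p k i j = ρn * a j) :
    ∀ σ : Fin n → Bool, (∀ i, 0 ≤ Smag n g σ i) → ∀ t : ℕ,
      (0 ≤ ∑ i, a i * Eexp n β k g σ t i ∧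
        ∑ i, a i * Eexp n β k g σ t i ≤ ρn ^ t * ∑ i, a i * Smag n g σ i) ∧
      ∀ i : Fin m,
        0 ≤ Eexp n β k g σ t i ∧
        Eexp n β k g σ t i ≤
          Real.sqrt (p i) * (ρn ^ t * Real.sqrt (∑ j, (Smag n g σ j) ^ 2 / p j)) := by
  intro σ hσ t
  have hk (i j : Fin m) : 0 ≤ k i j := (hP.hkpos i j).le
  have ha' (i : Fin m) : 0 ≤ a i := (ha.hpos i).le
  obtain ⟨e, he, hflip⟩ := exists_flipPerm_le hg.1 hσ
  have hnonneg : 0 ≤ Eexp n β k g σ t := by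
    have := Eexp_mono (k := k) (g := g) hβ0 hk t hflip
    simp only [Eexp_flipPerm e he] at this
    exact fun i => neg_le_self_iff.1 (this i)
  have hQ : Eexp n β k g σ t ≤ Qmat n β p k ^ t *ᵥ Smag n g σ := fun i => by
    have := Eexp_sub_le hg hβ0 (fun i => (hP.hp i).le) hk t hflip i
    simp only [Eexp_flipPerm e he, Smag_flipPerm e he, sub_neg_eq_add, ← two_smul ℝ,
      mulVec_smul, Pi.smul_apply, smul_eq_mul] at this
    linarith
  have hρ' : a ᵥ* Qmat n β p k = ρn • a := funext hρ
  refine ⟨⟨dotProduct_nonneg_of_nonneg ha' hnonneg, ?_⟩, fun i => ⟨hnonneg i, ?_⟩⟩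
  · calc a ⬝ᵥ Eexp n β k g σ t ≤ a ⬝ᵥ (Qmat n β p k ^ t *ᵥ Smag n g σ) :=
          dotProduct_le_dotProduct_of_nonneg_left hQ ha'
      _ = ρn ^ t * a ⬝ᵥ Smag n g σ := by
          rw [dotProduct_mulVec, vecMul_pow_of_vecMul_eq_smul hρ', smul_dotProduct, smul_eq_mul]
  · exact (hQ i).trans (pow_mulVec_apply_le (Qmat_nonneg hβ0 (fun i => (hP.hp i).le) hk) hP.hp
      (Qmat_reversible n β hP.hksymm) ha.hpos hρ' t _ i)

/-- for `β < β_cr` and any nonnegative starting magnetization,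
`0 ≤ E_s[∑ i, a i S_t^{(i)}] ≤ ρ_n^t ∑ i, a i s^{(i)}` and
`0 ≤ E_s[S_t^{(i)}] ≤ √p_i ρ_n^t (∑ j, (s^{(j)})²/p_j)^{1/2}`. -/
theorem magnetization_expectation_bounds
    (m : ℕ) (p : Fin m → ℝ) (k : Fin m → Fin m → ℝ) (a : Fin m → ℝ)
    (hP : Params m p k) (ha : PFvec m p k a)
    (β : ℝ) (hβ0 : 0 ≤ β) (hβ : β < betaCr p k a)
    (n : ℕ) (hn : 0 < n) (g : Fin n → Fin m) (hg : IsPartition n p g)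
    (ρn : ℝ) (hρ : ∀ j, ∑ i, a i * Qmat n β p k i j = ρn * a j) :
    ∀ σ : Fin n → Bool, (∀ i, 0 ≤ Smag n g σ i) → ∀ t : ℕ,
      (0 ≤ ∑ i, a i * Eexp n β k g σ t i ∧
        ∑ i, a i * Eexp n β k g σ t i ≤ ρn ^ t * ∑ i, a i * Smag n g σ i) ∧
      ∀ i : Fin m,
        0 ≤ Eexp n β k g σ t i ∧
        Eexp n β k g σ t i ≤
          Real.sqrt (p i) * (ρn ^ t * Real.sqrt (∑ j, (Smag n g σ j) ^ 2 / p j)) :=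
  magnetization_expectation_bounds_general m p k a hP ha β hβ0 n g hg ρn hρ

end MultiIsing
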